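/- arXiv:2007.07091 — 6 statements merged into one kernel-verified Lean document; each statement's English description precedes it below -/
import Mathlib

section
/- Under the TE2 toll, the total cost of group 2, equal to (β₂·η/(1+η))·(N²/D)·f₂, is greater than or equal to its total cost under the no-toll equilibrium, equal to (β₁·η/(1+η))·(N²/D)·f₂·[α₂/α₁ + (β₂/β₁ − α₂/α₁)·f₂], whenever β₁ > β₂, α₁ > α₂ > 0, β₁/α₁ < β₂/α₂, and 0 < f₂ < 1. -/
theorem stmt_3 (α₁ α₂ β₁ β₂ η N D f₂ : ℝ)
    (hβ : β₁ > β₂) (hβ2 : β₂ > 0) (hα : α₁ > α₂) (hα2 : α₂ > 0)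
    (hratio : β₁ / α₁ < β₂ / α₂)
    (hη : η > 0) (hN : N > 0) (hD : D > 0) (hf0 : 0 < f₂) (hf1 : f₂ < 1) :
    (β₂ * η / (1 + η)) * (N ^ 2 / D) * f₂
      ≥ (β₁ * η / (1 + η)) * (N ^ 2 / D) * f₂
          * (α₂ / α₁ + (β₂ / β₁ - α₂ / α₁) * f₂) := by
  have hα1 : α₁ > 0 := lt_trans hα2 hα
  have hβ1 : β₁ > 0 := lt_trans hβ2 hβ
  have hcross : β₁ * α₂ < β₂ * α₁ := by
    rw [div_lt_div_iff₀ hα1 hα2] at hratio; linarith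
  have hkey : β₁ * (α₂ / α₁ + (β₂ / β₁ - α₂ / α₁) * f₂) ≤ β₂ := by
    have he : α₂ / α₁ + (β₂ / β₁ - α₂ / α₁) * f₂
        = (α₂ * β₁ + (β₂ * α₁ - α₂ * β₁) * f₂) / (α₁ * β₁) := by
      field_simp
    rw [he, mul_div_assoc', div_le_iff₀ (by positivity)]
    nlinarith [mul_pos hβ1 (mul_pos (sub_pos.2 hcross) (sub_pos.2 hf1))]
  have hpos : 0 < η / (1 + η) * (N ^ 2 / D) * f₂ := by positivity
  calc (β₁ * η / (1 + η)) * (N ^ 2 / D) * f₂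
          * (α₂ / α₁ + (β₂ / β₁ - α₂ / α₁) * f₂)
      = (β₁ * (α₂ / α₁ + (β₂ / β₁ - α₂ / α₁) * f₂)) * (η / (1 + η) * (N ^ 2 / D) * f₂) := by ring
    _ ≤ β₂ * (η / (1 + η) * (N ^ 2 / D) * f₂) := by
        exact mul_le_mul_of_nonneg_right hkey (le_of_lt hpos)
    _ = (β₂ * η / (1 + η)) * (N ^ 2 / D) * f₂ := by ring
end

section
/- Under the system-optimal toll with reversed order (β₁ > β₂), the total cost of group 2, (β₂η/(1+η))·(N²/D)·f₂, is greater than or equal to its no-toll total cost, (β₁η/(1+η))·(N²/D)·f₂·[α₂/α₁ + (β₂/β₁ − α₂/α₁)f₂], whenever β₁ > β₂ > 0, α₁ > α₂ > 0, β₁/α₁ < β₂/α₂, and 0 < f₂ < 1. -/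
theorem stmt_7 (α₁ α₂ β₁ β₂ η N D f₂ : ℝ)
    (hβ : β₁ > β₂) (hβ2 : β₂ > 0) (hα : α₁ > α₂) (hα2 : α₂ > 0)
    (hratio : β₁ / α₁ < β₂ / α₂)
    (hη : η > 0) (hN : N > 0) (hD : D > 0) (hf0 : 0 < f₂) (hf1 : f₂ < 1) :
    (β₂ * η / (1 + η)) * (N ^ 2 / D) * f₂
      ≥ (β₁ * η / (1 + η)) * (N ^ 2 / D) * f₂
          * (α₂ / α₁ + (β₂ / β₁ - α₂ / α₁) * f₂) := by
  have hα1 : α₁ > 0 := hα2.trans hα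
  have hβ1 : β₁ > 0 := hβ2.trans hβ
  have hcross : β₁ * α₂ < β₂ * α₁ := by
    rw [div_lt_div_iff₀ hα1 hα2] at hratio; linarith
  have hkey : β₁ * (α₂ / α₁ + (β₂ / β₁ - α₂ / α₁) * f₂) ≤ β₂ := by
    have h2 : α₂ / α₁ + (β₂ / β₁ - α₂ / α₁) * f₂ ≤ β₂ / β₁ := by
      have ha : α₂ / α₁ < β₂ / β₁ := by
        rw [div_lt_div_iff₀ hα1 hβ1]; nlinarith
      nlinarith
    calc β₁ * (α₂ / α₁ + (β₂ / β₁ - α₂ / α₁) * f₂) ≤ β₁ * (β₂ / β₁) :=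
          mul_le_mul_of_nonneg_left h2 hβ1.le
      _ = β₂ := by field_simp
  have hpos : (η / (1 + η)) * (N ^ 2 / D) * f₂ > 0 := by positivity
  calc β₁ * η / (1 + η) * (N ^ 2 / D) * f₂ * (α₂ / α₁ + (β₂ / β₁ - α₂ / α₁) * f₂)
      = (β₁ * (α₂ / α₁ + (β₂ / β₁ - α₂ / α₁) * f₂)) * ((η / (1 + η)) * (N ^ 2 / D) * f₂) := by
        ring
    _ ≤ β₂ * ((η / (1 + η)) * (N ^ 2 / D) * f₂) := mul_le_mul_of_nonneg_right hkey hpos.le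
    _ = β₂ * η / (1 + η) * (N ^ 2 / D) * f₂ := by ring
end

section
/- The TE1 toll revenue, (β₁η/(2(1+η)))(N²/D)[1 − 2(1 − α₂/α₁)f₂ + (1 + β₂/β₁ − 2α₂/α₁)f₂²], is less than or equal to the system-optimal toll revenue, (β₂η/(2(1+η)))(N²/D)[1 + (β₁/β₂ − 1)(1−f₂)²], whenever β₁ > β₂ > 0, α₁ > α₂ > 0, β₁/α₁ < β₂/α₂, and 0 ≤ f₂ ≤ 1. -/
theorem stmt_14 (α₁ α₂ β₁ β₂ η N D f₂ : ℝ)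
    (hβ : β₁ > β₂) (hβ2 : β₂ > 0) (hα : α₁ > α₂) (hα2 : α₂ > 0)
    (hratio : β₁ / α₁ < β₂ / α₂)
    (hη : η > 0) (hN : N > 0) (hD : D > 0) (hf0 : 0 ≤ f₂) (hf1 : f₂ ≤ 1) :
    (β₁ * η / (2 * (1 + η))) * (N ^ 2 / D)
        * (1 - 2 * (1 - α₂ / α₁) * f₂ + (1 + β₂ / β₁ - 2 * (α₂ / α₁)) * f₂ ^ 2)
      ≤ (β₂ * η / (2 * (1 + η))) * (N ^ 2 / D)
        * (1 + (β₁ / β₂ - 1) * (1 - f₂) ^ 2) := by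
  have hα1 : (0:ℝ) < α₁ := lt_trans hα2 hα
  have hβ1 : (0:ℝ) < β₁ := lt_trans hβ2 hβ
  have hη1 : (0:ℝ) < 1 + η := by linarith
  have key : β₁ * α₂ < β₂ * α₁ := by
    rw [div_lt_div_iff₀ hα1 hα2] at hratio; linarith
  have hdiff :
      (β₂ * η / (2 * (1 + η))) * (N ^ 2 / D)
        * (1 + (β₁ / β₂ - 1) * (1 - f₂) ^ 2)
      - (β₁ * η / (2 * (1 + η))) * (N ^ 2 / D)
        * (1 - 2 * (1 - α₂ / α₁) * f₂ + (1 + β₂ / β₁ - 2 * (α₂ / α₁)) * f₂ ^ 2)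
      = (η / (2 * (1 + η))) * (N ^ 2 / D) * (2 * f₂ * (1 - f₂))
        * ((β₂ * α₁ - β₁ * α₂) / α₁) := by
    field_simp
    ring
  have h1 : 0 ≤ (η / (2 * (1 + η))) * (N ^ 2 / D) * (2 * f₂ * (1 - f₂))
        * ((β₂ * α₁ - β₁ * α₂) / α₁) := by
    have hf : 0 ≤ 1 - f₂ := by linarith
    have hA : 0 ≤ η / (2 * (1 + η)) := by positivity
    have hB : 0 ≤ N ^ 2 / D := by positivity
    have hC : 0 ≤ 2 * f₂ * (1 - f₂) := mul_nonneg (by positivity) hf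
    have hE : 0 ≤ (β₂ * α₁ - β₁ * α₂) / α₁ := div_nonneg (by linarith) hα1.le
    exact mul_nonneg (mul_nonneg (mul_nonneg hA hB) hC) hE
  linarith [hdiff, h1]
end

section
/- For β₁ > β₂ > 0 and f₂ ∈ [0,1], the schedule-delay cost under the system-optimal toll with reversed order, (β₂η/(2(1+η)))(N²/D)[1 + (β₁/β₂ − 1)(1−f₂)²], is less than or equal to the schedule-delay cost under the no-toll (and TE) ordering, (β₁η/(2(1+η)))(N²/D)[1 + (β₂/β₁ − 1)f₂²]. -/
theorem stmt_15 (β₁ β₂ η N D f₂ : ℝ)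
    (hβ : β₁ > β₂) (hβ2 : β₂ > 0)
    (hη : η > 0) (hN : N > 0) (hD : D > 0) (hf0 : 0 ≤ f₂) (hf1 : f₂ ≤ 1) :
    (β₂ * η / (2 * (1 + η))) * (N ^ 2 / D)
        * (1 + (β₁ / β₂ - 1) * (1 - f₂) ^ 2)
      ≤ (β₁ * η / (2 * (1 + η))) * (N ^ 2 / D)
        * (1 + (β₂ / β₁ - 1) * f₂ ^ 2) := by
  have hβ1 : β₁ > 0 := lt_trans hβ2 hβ
  have key : β₂ * (1 + (β₁ / β₂ - 1) * (1 - f₂) ^ 2)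
      ≤ β₁ * (1 + (β₂ / β₁ - 1) * f₂ ^ 2) := by
    have h1 : β₂ * (1 + (β₁ / β₂ - 1) * (1 - f₂) ^ 2)
        = β₂ + (β₁ - β₂) * (1 - f₂) ^ 2 := by
      field_simp
    have h2 : β₁ * (1 + (β₂ / β₁ - 1) * f₂ ^ 2)
        = β₁ + (β₂ - β₁) * f₂ ^ 2 := by
      field_simp
    rw [h1, h2]
    nlinarith [mul_nonneg hf0 (sub_nonneg.mpr hf1), sub_pos.mpr hβ]
  have hc : 0 < η / (2 * (1 + η)) * (N ^ 2 / D) := by positivity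
  calc (β₂ * η / (2 * (1 + η))) * (N ^ 2 / D) * (1 + (β₁ / β₂ - 1) * (1 - f₂) ^ 2)
      = η / (2 * (1 + η)) * (N ^ 2 / D) * (β₂ * (1 + (β₁ / β₂ - 1) * (1 - f₂) ^ 2)) := by ring
    _ ≤ η / (2 * (1 + η)) * (N ^ 2 / D) * (β₁ * (1 + (β₂ / β₁ - 1) * f₂ ^ 2)) := by
        exact mul_le_mul_of_nonneg_left key hc.le
    _ = (β₁ * η / (2 * (1 + η))) * (N ^ 2 / D) * (1 + (β₂ / β₁ - 1) * f₂ ^ 2) := by ring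
end

section
/- For the system-optimal toll in the reversed-order case, y₁^{SO} ≥ 1 ≥ y₂^{SO}, where y_k^{SO} = (SDC_k^{NO} + TTC_k^{NO} − SDC_k^{SO})/TRC_k^{SO}, under the assumptions β₁ > β₂ > 0, α₁ > α₂ > 0, β₁/α₁ < β₂/α₂, 0 < f₂ < 1, using the closed-form cost expressions. -/
theorem stmt_17 (α₁ α₂ β₁ β₂ η N D f₂ : ℝ)
    (hβ : β₁ > β₂) (hβ2 : β₂ > 0) (hα : α₁ > α₂) (hα2 : α₂ > 0)
    (hratio : β₁ / α₁ < β₂ / α₂)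
    (hη : η > 0) (hN : N > 0) (hD : D > 0) (hf0 : 0 < f₂) (hf1 : f₂ < 1) :
    ((β₁ * η / (2 * (1 + η))) * (N ^ 2 / D) * (1 - f₂ ^ 2)
        + (β₁ * η / (2 * (1 + η))) * (N ^ 2 / D) * (1 - f₂) ^ 2
        - (β₁ * η / (2 * (1 + η))) * (N ^ 2 / D) * (1 - f₂) ^ 2)
      / ((β₂ * η / (2 * (1 + η))) * (N ^ 2 / D) * (1 - f₂)
          * (2 * f₂ + (β₁ / β₂) * (1 - f₂))) ≥ 1 ∧
    ((β₂ * η / (2 * (1 + η))) * (N ^ 2 / D) * f₂ ^ 2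
        + (β₁ * η / (2 * (1 + η))) * (N ^ 2 / D) * f₂
            * (2 * (α₂ / α₁) + (β₂ / β₁ - 2 * (α₂ / α₁)) * f₂)
        - (β₂ * η / (2 * (1 + η))) * (N ^ 2 / D) * (1 - (1 - f₂) ^ 2))
      / ((β₂ * η / (2 * (1 + η))) * (N ^ 2 / D) * f₂ ^ 2) ≤ 1 := by
  have hβ1 : (0:ℝ) < β₁ := lt_trans hβ2 hβ
  have hα1 : (0:ℝ) < α₁ := lt_trans hα2 hα
  have hηp : (0:ℝ) < 1 + η := by linarith
  have hf1' : (0:ℝ) < 1 - f₂ := by linarith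
  have hcross : β₁ * α₂ < β₂ * α₁ := by
    rw [div_lt_div_iff₀ hα1 hα2] at hratio; linarith
  set C : ℝ := η / (2 * (1 + η)) * (N ^ 2 / D) with hCdef
  have hC : (0:ℝ) < C := by rw [hCdef]; positivity
  set r : ℝ := β₁ / β₂ with hrdef
  have hrr : β₂ * r = β₁ := by rw [hrdef]; field_simp
  set s : ℝ := α₂ / α₁ with hsdef
  have hss : α₁ * s = α₂ := by rw [hsdef]; field_simp
  set t : ℝ := β₂ / β₁ with htdef
  have htt : β₁ * t = β₂ := by rw [htdef]; field_simp
  have e1 : β₁ * η / (2 * (1 + η)) * (N ^ 2 / D) = β₁ * C := by rw [hCdef]; ring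
  have e2 : β₂ * η / (2 * (1 + η)) * (N ^ 2 / D) = β₂ * C := by rw [hCdef]; ring
  rw [e1, e2]
  constructor
  · rw [ge_iff_le, le_div_iff₀ (by positivity)]
    have key : β₁ * C * (1 - f₂ ^ 2) + β₁ * C * (1 - f₂) ^ 2 - β₁ * C * (1 - f₂) ^ 2
        - β₂ * C * (1 - f₂) * (2 * f₂ + r * (1 - f₂))
        = C * (1 - f₂) * (2 * f₂) * (β₁ - β₂) := by
      linear_combination (-(C * (1 - f₂) ^ 2)) * hrr
    nlinarith [mul_pos (mul_pos hC hf1') (mul_pos hf0 (sub_pos.mpr hβ))]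
  · rw [div_le_one (by positivity)]
    have hsneg : β₁ * s - β₂ < 0 := by nlinarith [hss, hcross, hα1]
    have key : β₂ * C * f₂ ^ 2 + β₁ * C * f₂ * (2 * s + (t - 2 * s) * f₂)
        - β₂ * C * (1 - (1 - f₂) ^ 2) - β₂ * C * f₂ ^ 2
        = 2 * C * f₂ * (1 - f₂) * (β₁ * s - β₂) := by
      linear_combination (C * f₂ ^ 2) * htt
    nlinarith [mul_pos (mul_pos hC hf0) hf1',
      mul_neg_of_pos_of_neg (mul_pos (mul_pos hC hf0) hf1') hsneg]
end

section
/- The social benefit of the system-optimal toll, (SDC^{NO} + TTC^{NO} − SDC^{SO}) + TRC^{SO}, is greater than or equal to the social benefit of the TE2 toll, (SDC^{NO} + TTC^{NO} − SDC^{TE2}) + TRC^{TE2}, whenever β₁ ≥ β₂ > 0 and 0 ≤ f₂ ≤ 1; since TRC^{SO} = TRC^{TE2}, this is equivalent to SDC^{SO} ≤ SDC^{TE2}. -/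
theorem stmt_18 (β₁ β₂ η N D f₂ SDCNO TTCNO SDCSO SDCTE2 TRCSO TRCTE2 : ℝ)
    (hβ : β₁ ≥ β₂) (hβ2 : β₂ > 0)
    (hη : η > 0) (hN : N > 0) (hD : D > 0) (hf0 : 0 ≤ f₂) (hf1 : f₂ ≤ 1)
    (hSDCSO : SDCSO = (β₂ * η / (2 * (1 + η))) * (N ^ 2 / D)
        * (1 + (β₁ / β₂ - 1) * (1 - f₂) ^ 2))
    (hSDCNO : SDCNO = (β₁ * η / (2 * (1 + η))) * (N ^ 2 / D)
        * (1 + (β₂ / β₁ - 1) * f₂ ^ 2))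
    (hSDCTE2 : SDCTE2 = SDCNO)
    (hTRC : TRCSO = TRCTE2) :
    (SDCNO + TTCNO - SDCSO) + TRCSO ≥ (SDCNO + TTCNO - SDCTE2) + TRCTE2 := by
  have hβ1 : β₁ > 0 := lt_of_lt_of_le hβ2 hβ
  have hηp : (1 + η) > 0 := by linarith
  subst hSDCSO hSDCNO hSDCTE2 hTRC
  have key : β₂ * (1 + (β₁ / β₂ - 1) * (1 - f₂) ^ 2)
      ≤ β₁ * (1 + (β₂ / β₁ - 1) * f₂ ^ 2) := by
    have h2 : β₂ * (1 + (β₁ / β₂ - 1) * (1 - f₂) ^ 2)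
        = β₂ + (β₁ - β₂) * (1 - f₂) ^ 2 := by
      field_simp
    have h1 : β₁ * (1 + (β₂ / β₁ - 1) * f₂ ^ 2)
        = β₁ + (β₂ - β₁) * f₂ ^ 2 := by
      field_simp
    rw [h1, h2]
    nlinarith [mul_nonneg hf0 (sub_nonneg.mpr hf1), sub_nonneg.mpr hβ]
  have hc : (0:ℝ) ≤ η / (2 * (1 + η)) * (N ^ 2 / D) := by positivity
  have main := mul_le_mul_of_nonneg_left key hc
  have e1 : η / (2 * (1 + η)) * (N ^ 2 / D) * (β₂ * (1 + (β₁ / β₂ - 1) * (1 - f₂) ^ 2))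
      = β₂ * η / (2 * (1 + η)) * (N ^ 2 / D) * (1 + (β₁ / β₂ - 1) * (1 - f₂) ^ 2) := by
    ring
  have e2 : η / (2 * (1 + η)) * (N ^ 2 / D) * (β₁ * (1 + (β₂ / β₁ - 1) * f₂ ^ 2))
      = β₁ * η / (2 * (1 + η)) * (N ^ 2 / D) * (1 + (β₂ / β₁ - 1) * f₂ ^ 2) := by
    ring
  rw [e1, e2] at main
  linarith
end
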